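/- Fix τ with 0 < τ ≤ 1/(8d²) and a slack vector ν with ‖ν‖_∞ ≤ 1/(4d). Let Γ be a minimizer of ⟨C,Γ⟩ − (1/η)H(Γ) over 𝕃₂^ν, let Γ*_η be the minimizer of ⟨C,Γ⟩ − (1/η)H(Γ) over 𝕃₂, and let Γ(2) ∈ 𝕃₂ be any marginal vector all of whose entries are at least τ and which satisfies ‖Γ − Γ(2)‖₁ ≤ 2‖ν‖₁ + 2(|E|+n)d²τ. Then Σ_{i∈V} (1/2)‖Γ(2)_i − (Γ*_η)_i‖₁² + Σ_{ij∈E} (1/2)‖Γ(2)_{ij} − (Γ*_η)_{ij}‖₁² ≤ (η‖C‖_∞ + log(1/τ))·(8·d·deg(G)·‖ν‖₁ + 10(|E|+n)d²τ). -/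

import Mathlib

noncomputable section

/-- A marginal vector: a vector `Γ_i ∈ ℝ^d` for every vertex and a matrix
`Γ_{ij} ∈ ℝ^{d×d}` for every edge (components outside `E` are ignored). -/
abbrev MV (V : Type) (d : ℕ) : Type :=
  (V → Fin d → ℝ) × ((V × V) → Fin d → Fin d → ℝ)

/-- `‖Γ‖₁`: the sum of absolute values of all entries of `Γ`. -/
def mvL1 {V : Type} [Fintype V] {d : ℕ} (E : Finset (V × V)) (Γ : MV V d) : ℝ :=
  (∑ i : V, ∑ x : Fin d, |Γ.1 i x|) + ∑ e ∈ E, ∑ x : Fin d, ∑ y : Fin d, |Γ.2 e x y|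

/-- A slack vector: for each edge `ij`, vectors `ν_{ij}` (first component)
and `ν_{ji}` (second component) in `ℝ^d`. -/
abbrev Slk (V : Type) (d : ℕ) : Type :=
  ((V × V) → Fin d → ℝ) × ((V × V) → Fin d → ℝ)

/-- Slack vectors have zero coordinate sums on every edge. -/
def isSlack {V : Type} {d : ℕ} (E : Finset (V × V)) (ν : Slk V d) : Prop :=
  ∀ e ∈ E, (∑ x, ν.1 e x = 0) ∧ (∑ x, ν.2 e x = 0)

/-- `‖ν‖₁`: the sum of absolute values of all entries of the slack vector. -/
def slkL1 {V : Type} {d : ℕ} (E : Finset (V × V)) (ν : Slk V d) : ℝ :=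
  ∑ e ∈ E, ((∑ x, |ν.1 e x|) + ∑ x, |ν.2 e x|)

/-- Membership in the slack polytope `𝕃₂^ν`; the local polytope `𝕃₂` is
`𝕃₂^0`. -/
def memSL2 {V : Type} [Fintype V] {d : ℕ} (E : Finset (V × V)) (ν : Slk V d)
    (Γ : MV V d) : Prop :=
  (∀ i x, 0 ≤ Γ.1 i x) ∧ (∀ i, ∑ x, Γ.1 i x = 1) ∧
  (∀ e ∈ E, ∀ x y, 0 ≤ Γ.2 e x y) ∧
  (∀ e ∈ E, ∀ x, ∑ y, Γ.2 e x y = Γ.1 e.1 x + ν.1 e x) ∧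
  (∀ e ∈ E, ∀ y, ∑ x, Γ.2 e x y = Γ.1 e.2 y + ν.2 e y) ∧
  (∀ e ∈ E, ∑ x, ∑ y, Γ.2 e x y = 1)

/-- Maximum degree of the graph. -/
def degG {V : Type} [Fintype V] [DecidableEq V] (E : Finset (V × V)) : ℕ :=
  Finset.univ.sup fun i : V => (E.filter fun e => e.1 = i ∨ e.2 = i).card

/-- The objective `⟨C, Γ⟩`. -/
def mvInner {V : Type} [Fintype V] {d : ℕ} (E : Finset (V × V))
    (Cv : V → Fin d → ℝ) (Ce : V × V → Fin d → Fin d → ℝ) (Γ : MV V d) : ℝ :=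
  (∑ i : V, ∑ x : Fin d, Cv i x * Γ.1 i x) +
    ∑ e ∈ E, ∑ x : Fin d, ∑ y : Fin d, Ce e x y * Γ.2 e x y

/-- `H(Γ) = Σ_e Γ_e (1 − log Γ_e)` over all entries (with `0 log 0 = 0`). -/
def mvH {V : Type} [Fintype V] {d : ℕ} (E : Finset (V × V)) (Γ : MV V d) : ℝ :=
  (∑ i : V, ∑ x : Fin d, Γ.1 i x * (1 - Real.log (Γ.1 i x))) +
    ∑ e ∈ E, ∑ x : Fin d, ∑ y : Fin d, Γ.2 e x y * (1 - Real.log (Γ.2 e x y))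

/-!
Let `F Γ = η ⟨C, Γ⟩ - H Γ`. By Pinsker's inequality `Σ Γ_e log Γ_e` is strongly convex for the
blockwise `ℓ₁` norms, so comparing `Γ*_η` with `(1 - t) Γ*_η + t Γ(2) ∈ 𝕃₂` and letting `t → 0`
gives `½ Σ_blocks ‖Γ(2) - Γ*_η‖₁² ≤ F Γ(2) - F Γ*_η`. All slack polytopes carry the same total mass
`n + |E|`, and `x ↦ x log x` is `log (1/τ)`-Lipschitz on pairs of points of `[0, 1]` one of which
is `≥ τ`; hence `F` is `(η ‖C‖_∞ + log (1/τ))`-Lipschitz in `ℓ₁` towards points with all entries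
`≥ τ`. For any `G ∈ 𝕃₂^ν`, minimality of `Γ` gives
`F Γ(2) - F Γ*_η ≤ (F Γ(2) - F Γ) + (F G - F Γ*_η)`, so it remains to find such a `G` with entries
`≥ τ` close to `Γ*_η`.

This `G` is built from `Γ*_η`: every vertex marginal moves mass onto the slack of its incident
edges, every edge block is recoupled to the new marginals, and the result is mixed with the uniform
marginal vector with weight `d² τ`; this costs `2 (2 deg + 1) ‖ν‖₁ + 2 (|E| + n) d² τ` in `ℓ₁`.
-/

open Finset Real InformationTheory

section Pinsker

lemma monotoneOn_add_one_mul_log_sub :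
    MonotoneOn (fun x : ℝ => (x + 1) * log x - 2 * (x - 1)) (Set.Ioi 0) := by
  have hderiv : ∀ x : ℝ, 0 < x →
      HasDerivAt (fun x : ℝ => (x + 1) * log x - 2 * (x - 1)) (log x + x⁻¹ - 1) x := by
    intro x hx
    have := (((hasDerivAt_id x).add_const 1).mul (hasDerivAt_log hx.ne')).sub
      (((hasDerivAt_id x).sub_const 1).const_mul 2)
    refine this.congr_deriv ?_
    simp only [id]
    field_simp
    ring
  refine monotoneOn_of_hasDerivWithinAt_nonneg (f' := fun x => log x + x⁻¹ - 1) (convex_Ioi 0)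
    (fun x hx => (hderiv x hx).continuousAt.continuousWithinAt) ?_ ?_ <;> rw [interior_Ioi]
  · exact fun x hx => (hderiv x hx).hasDerivWithinAt
  · exact fun x hx => by linarith [one_sub_inv_le_log_of_pos hx]

lemma three_mul_sq_sub_one_le_klFun {x : ℝ} (hx : 0 ≤ x) :
    3 * (x - 1) ^ 2 ≤ (2 * x + 4) * klFun x := by
  set h : ℝ → ℝ := fun x => (2 * x + 4) * klFun x - 3 * (x - 1) ^ 2
  set k : ℝ → ℝ := fun x => (x + 1) * log x - 2 * (x - 1)
  have hcont : ContinuousOn h (Set.Ici 0) := by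
    have := continuous_klFun
    fun_prop
  have hderiv : ∀ y : ℝ, 0 < y → HasDerivAt h (4 * k y) y := by
    intro y hy
    refine (((((hasDerivAt_id y).const_mul 2).add_const 4).mul (hasDerivAt_klFun hy.ne')).sub
      ((((hasDerivAt_id y).sub_const 1).pow 2).const_mul 3)).congr_deriv ?_
    simp only [k, klFun_apply, id]
    ring
  have hk1 : k 1 = 0 := by simp [k]
  have hh1 : h 1 = 0 := by simp [h, klFun_one]
  suffices 0 ≤ h x by simp only [h] at this; linarith
  rw [← hh1]
  rcases le_total 1 x with hx1 | hx1
  · refine monotoneOn_of_hasDerivWithinAt_nonneg (f' := fun y => 4 * k y) (convex_Ici 1)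
      (hcont.mono (Set.Ici_subset_Ici.2 zero_le_one)) ?_ ?_ (Set.mem_Ici.2 le_rfl) hx1 hx1
      <;> rw [interior_Ici]
    · exact fun y hy => (hderiv y (one_pos.trans hy)).hasDerivWithinAt
    · exact fun y hy => by
        have := monotoneOn_add_one_mul_log_sub (Set.mem_Ioi.2 one_pos)
          (Set.mem_Ioi.2 (one_pos.trans hy)) hy.le
        linarith
  · refine antitoneOn_of_hasDerivWithinAt_nonpos (f' := fun y => 4 * k y) (convex_Icc 0 1)
      (hcont.mono Set.Icc_subset_Ici_self) ?_ ?_ ⟨hx, hx1⟩ ⟨zero_le_one, le_rfl⟩ hx1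
      <;> rw [interior_Icc]
    · exact fun y hy => (hderiv y hy.1).hasDerivWithinAt
    · exact fun y hy => by
        have := monotoneOn_add_one_mul_log_sub (Set.mem_Ioi.2 hy.1) (Set.mem_Ioi.2 one_pos)
          hy.2.le
        linarith

lemma mul_log_sub_mul_log_sub_add_eq {a b : ℝ} (ha : 0 ≤ a) (hb : 0 < b) :
    a * log a - a * log b - a + b = b * klFun (a / b) := by
  rcases ha.eq_or_lt with rfl | ha
  · simp [klFun_zero]
  rw [klFun_apply, log_div ha.ne' hb.ne']
  field_simp
  ring

lemma kl_integrand_nonneg_and_three_mul_sq_sub_le {a b : ℝ} (ha : 0 ≤ a) (hb : 0 ≤ b)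
    (hab : b = 0 → a = 0) :
    0 ≤ a * log a - a * log b - a + b ∧
      3 * (a - b) ^ 2 ≤ (2 * a + 4 * b) * (a * log a - a * log b - a + b) := by
  rcases hb.eq_or_lt with rfl | hb
  · simp [hab rfl]
  have hratio : 0 ≤ a / b := div_nonneg ha hb.le
  rw [mul_log_sub_mul_log_sub_add_eq ha hb]
  refine ⟨mul_nonneg hb.le (klFun_nonneg hratio), ?_⟩
  calc 3 * (a - b) ^ 2 = b ^ 2 * (3 * (a / b - 1) ^ 2) := by field_simp
    _ ≤ b ^ 2 * ((2 * (a / b) + 4) * klFun (a / b)) :=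
      mul_le_mul_of_nonneg_left (three_mul_sq_sub_one_le_klFun hratio) (sq_nonneg b)
    _ = (2 * a + 4 * b) * (b * klFun (a / b)) := by field_simp

def relEntropy {ι : Type*} [Fintype ι] (p q : ι → ℝ) : ℝ := ∑ x, (p x * log (p x) - p x * log (q x))

theorem sq_sum_abs_sub_le_two_mul_relEntropy {ι : Type*} [Fintype ι] {p q : ι → ℝ}
    (hp : ∀ x, 0 ≤ p x) (hq : ∀ x, 0 ≤ q x) (hp1 : ∑ x, p x = 1) (hq1 : ∑ x, q x = 1)
    (hpq : ∀ x, q x = 0 → p x = 0) :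
    (∑ x, |p x - q x|) ^ 2 ≤ 2 * relEntropy p q := by
  have key x := kl_integrand_nonneg_and_three_mul_sq_sub_le (hp x) (hq x) (hpq x)
  have hCS := sum_sq_le_sum_mul_sum_of_sq_le_mul univ (r := fun x => |p x - q x|)
    (f := fun x => (2 * p x + 4 * q x) / 3)
    (g := fun x => p x * log (p x) - p x * log (q x) - p x + q x)
    (fun x _ => by linarith [hp x, hq x]) (fun x _ => (key x).1)
    (fun x _ => by rw [sq_abs, div_mul_eq_mul_div, le_div_iff₀ three_pos]; linarith [(key x).2])
  have hf : ∑ x, (2 * p x + 4 * q x) / 3 = 2 := by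
    simp only [← sum_div, sum_add_distrib, ← mul_sum, hp1, hq1]
    norm_num
  have hg : ∑ x, (p x * log (p x) - p x * log (q x) - p x + q x) = relEntropy p q := by
    simp only [relEntropy, sum_add_distrib, sum_sub_distrib, hp1, hq1, sub_add_cancel]
  rwa [hf, hg] at hCS

theorem sum_mul_log_convex_gap_ge {ι : Type*} [Fintype ι] {p q : ι → ℝ}
    (hp : ∀ x, 0 ≤ p x) (hq : ∀ x, 0 ≤ q x) (hp1 : ∑ x, p x = 1) (hq1 : ∑ x, q x = 1)
    {t : ℝ} (ht0 : 0 < t) (ht1 : t < 1) :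
    t * (1 - t) / 2 * (∑ x, |p x - q x|) ^ 2 ≤
      (1 - t) * ∑ x, p x * log (p x) + t * ∑ x, q x * log (q x) -
        ∑ x, ((1 - t) * p x + t * q x) * log ((1 - t) * p x + t * q x) := by
  set r : ι → ℝ := fun x => (1 - t) * p x + t * q x
  have hp' x := mul_nonneg (sub_pos.2 ht1).le (hp x)
  have hq' x := mul_nonneg ht0.le (hq x)
  have hr x : 0 ≤ r x := add_nonneg (hp' x) (hq' x)
  have hr1 : ∑ x, r x = 1 := by
    simp only [r, sum_add_distrib, ← mul_sum, hp1, hq1]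
    ring
  have hpr x (h : (1 - t) * p x + t * q x = 0) : p x = 0 :=
    (mul_eq_zero.1 (by linarith [hp' x, hq' x])).resolve_left (sub_pos.2 ht1).ne'
  have hqr x (h : (1 - t) * p x + t * q x = 0) : q x = 0 :=
    (mul_eq_zero.1 (by linarith [hp' x, hq' x])).resolve_left ht0.ne'
  have hP := sq_sum_abs_sub_le_two_mul_relEntropy hp hr hp1 hr1 hpr
  have hQ := sq_sum_abs_sub_le_two_mul_relEntropy hq hr hq1 hr1 hqr
  have hp_sub : ∑ x, |p x - r x| = t * ∑ x, |p x - q x| := by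
    rw [mul_sum]
    refine sum_congr rfl fun x _ => ?_
    rw [show p x - r x = t * (p x - q x) by ring, abs_mul, abs_of_pos ht0]
  have hq_sub : ∑ x, |q x - r x| = (1 - t) * ∑ x, |p x - q x| := by
    rw [mul_sum]
    refine sum_congr rfl fun x _ => ?_
    rw [show q x - r x = (1 - t) * -(p x - q x) by ring, abs_mul, abs_neg,
      abs_of_pos (sub_pos.2 ht1)]
  have hgap : (1 - t) * ∑ x, p x * log (p x) + t * ∑ x, q x * log (q x) -
      ∑ x, r x * log (r x) = (1 - t) * relEntropy p r + t * relEntropy q r := by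
    simp only [relEntropy, mul_sub, mul_sum, ← sum_sub_distrib, ← sum_add_distrib]
    refine sum_congr rfl fun x _ => ?_
    simp only [r]
    ring
  rw [hgap]
  rw [hp_sub] at hP
  rw [hq_sub] at hQ
  nlinarith [mul_le_mul_of_nonneg_left hP (sub_pos.2 ht1).le, mul_le_mul_of_nonneg_left hQ ht0.le]

end Pinsker

lemma le_of_forall_one_sub_mul_le {a b : ℝ} (h : ∀ t : ℝ, 0 < t → t < 1 → (1 - t) * a ≤ b) :
    a ≤ b := by
  have hlim : Filter.Tendsto (fun t : ℝ => (1 - t) * a) (nhdsWithin 0 (Set.Ioi 0)) (nhds a) := by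
    have : Continuous fun t : ℝ => (1 - t) * a := by fun_prop
    simpa using this.continuousWithinAt (s := Set.Ioi 0) (x := 0) |>.tendsto
  refine le_of_tendsto hlim ?_
  filter_upwards [Ioo_mem_nhdsGT one_pos] with t ht using h t ht.1 ht.2

section EntropyBounds

lemma mul_log_sub_mul_log_mem_Icc {a b : ℝ} (ha : 0 ≤ a) (hab : a ≤ b) :
    (b - a) * log b ≤ b * log b - a * log a ∧ b * log b - a * log a ≤ (b - a) * (1 + log b) := by
  rcases ha.eq_or_lt with rfl | ha
  · simp [mul_add, hab]
  have hb : 0 < b := ha.trans_le hab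
  have hlog : log b - log a ≤ b / a - 1 := by
    rw [← log_div hb.ne' ha.ne']
    exact log_le_sub_one_of_pos (div_pos hb ha)
  constructor
  · nlinarith [mul_le_mul_of_nonneg_left (log_le_log ha hab) ha.le]
  · have h := mul_le_mul_of_nonneg_left hlog ha.le
    rw [mul_sub_one, mul_div_cancel₀ _ ha.ne'] at h
    nlinarith

lemma abs_mul_log_sub_mul_log_le_of_le {τ a b : ℝ} (hτ : 0 < τ) (hL : 1 ≤ log (1 / τ))
    (ha : 0 ≤ a) (hab : a ≤ b) (hτb : τ ≤ b) (hb1 : b ≤ 1) :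
    |b * log b - a * log a| ≤ log (1 / τ) * (b - a) := by
  obtain ⟨hlow, hup⟩ := mul_log_sub_mul_log_mem_Icc ha hab
  have hlogb : -log (1 / τ) ≤ log b := by
    rw [one_div, log_inv, neg_neg]
    exact log_le_log hτ hτb
  have hlogb1 : log b ≤ 0 := log_nonpos (hτ.le.trans hτb) hb1
  have hba : 0 ≤ b - a := sub_nonneg.2 hab
  rw [abs_le]
  constructor <;> nlinarith

lemma abs_mul_log_sub_mul_log_le {τ a b : ℝ} (hτ : 0 < τ) (hL : 1 ≤ log (1 / τ))
    (ha : 0 ≤ a) (ha1 : a ≤ 1) (hτb : τ ≤ b) (hb1 : b ≤ 1) :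
    |b * log b - a * log a| ≤ log (1 / τ) * |a - b| := by
  rcases le_total a b with hab | hba
  · rw [abs_of_nonpos (sub_nonpos.2 hab), neg_sub]
    exact abs_mul_log_sub_mul_log_le_of_le hτ hL ha hab hτb hb1
  · rw [abs_sub_comm, abs_of_nonneg (sub_nonneg.2 hba)]
    exact abs_mul_log_sub_mul_log_le_of_le hτ hL (hτ.le.trans hτb) hba (hτb.trans hba) ha1

lemma one_le_log_one_div {τ : ℝ} (hτ0 : 0 < τ) (hτ : τ ≤ 1 / 3) : 1 ≤ log (1 / τ) := by
  rw [le_log_iff_exp_le (by positivity), le_div_iff₀ hτ0]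
  nlinarith [exp_one_lt_three, exp_pos 1]

end EntropyBounds

section MarginalVectors

variable {V : Type} [Fintype V] {d : ℕ} (E : Finset (V × V))

def mass (Γ : MV V d) : ℝ := (∑ i, ∑ x, Γ.1 i x) + ∑ e ∈ E, ∑ x, ∑ y, Γ.2 e x y

def negEntropy (Γ : MV V d) : ℝ :=
  (∑ i, ∑ x, Γ.1 i x * log (Γ.1 i x)) + ∑ e ∈ E, ∑ x, ∑ y, Γ.2 e x y * log (Γ.2 e x y)

def regObj (Cv : V → Fin d → ℝ) (Ce : V × V → Fin d → Fin d → ℝ) (η : ℝ) (Γ : MV V d) : ℝ :=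
  η * mvInner E Cv Ce Γ - mvH E Γ

def blockDistSq (X Y : MV V d) : ℝ :=
  (∑ i, (∑ x, |X.1 i x - Y.1 i x|) ^ 2) + ∑ e ∈ E, (∑ x, ∑ y, |X.2 e x y - Y.2 e x y|) ^ 2

variable {E}

lemma regObj_le_regObj {Cv : V → Fin d → ℝ} {Ce : V × V → Fin d → Fin d → ℝ} {η : ℝ} (hη : 0 < η)
    {X Y : MV V d}
    (h : mvInner E Cv Ce X - 1 / η * mvH E X ≤ mvInner E Cv Ce Y - 1 / η * mvH E Y) :
    regObj E Cv Ce η X ≤ regObj E Cv Ce η Y := by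
  have := mul_le_mul_of_nonneg_left h hη.le
  rwa [mul_sub, mul_sub, ← mul_assoc, ← mul_assoc, mul_one_div_cancel hη.ne', one_mul, one_mul]
    at this

lemma blockDistSq_comm (X Y : MV V d) : blockDistSq E X Y = blockDistSq E Y X := by
  simp only [blockDistSq, abs_sub_comm (X.1 _ _), abs_sub_comm (X.2 _ _ _)]

lemma mvH_eq_mass_sub_negEntropy (Γ : MV V d) : mvH E Γ = mass E Γ - negEntropy E Γ := by
  simp only [mvH, mass, negEntropy, mul_one_sub, sum_sub_distrib]
  ring

lemma mvInner_smul_add_smul (Cv : V → Fin d → ℝ) (Ce : V × V → Fin d → Fin d → ℝ)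
    (a b : ℝ) (X Y : MV V d) :
    mvInner E Cv Ce (a • X + b • Y) = a * mvInner E Cv Ce X + b * mvInner E Cv Ce Y := by
  simp only [mvInner, Prod.fst_add, Prod.snd_add, Prod.smul_fst, Prod.smul_snd, Pi.add_apply,
    Pi.smul_apply, smul_eq_mul, mul_add, sum_add_distrib, mul_left_comm _ a, mul_left_comm _ b,
    ← mul_sum]
  ring

lemma mvInner_sub_le_mul_mvL1 {Cv : V → Fin d → ℝ} {Ce : V × V → Fin d → Fin d → ℝ} {c : ℝ}
    (hCv : ∀ i x, |Cv i x| ≤ c) (hCe : ∀ e ∈ E, ∀ x y, |Ce e x y| ≤ c) (A B : MV V d) :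
    mvInner E Cv Ce B - mvInner E Cv Ce A ≤ c * mvL1 E (A - B) := by
  have key {w a b : ℝ} (hw : |w| ≤ c) : w * b - w * a ≤ c * |a - b| :=
    calc w * b - w * a ≤ |w * (b - a)| := (mul_sub w b a).symm ▸ le_abs_self _
      _ ≤ c * |a - b| := by rw [abs_mul, abs_sub_comm]; gcongr
  calc mvInner E Cv Ce B - mvInner E Cv Ce A
      = (∑ i, ∑ x, (Cv i x * B.1 i x - Cv i x * A.1 i x)) +
          ∑ e ∈ E, ∑ x, ∑ y, (Ce e x y * B.2 e x y - Ce e x y * A.2 e x y) := by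
        simp only [mvInner, sum_sub_distrib]
        ring
    _ ≤ (∑ i, ∑ x, c * |A.1 i x - B.1 i x|) + ∑ e ∈ E, ∑ x, ∑ y, c * |A.2 e x y - B.2 e x y| := by
        gcongr with i _ x _ e he x _ y _
        · exact key (hCv i x)
        · exact key (hCe e he x y)
    _ = c * mvL1 E (A - B) := by
        simp only [mvL1, mul_add, mul_sum, Prod.fst_sub, Prod.snd_sub, Pi.sub_apply]

lemma memSL2.mass_eq {ν : Slk V d} {Γ : MV V d} (h : memSL2 E ν Γ) :
    mass E Γ = Fintype.card V + #E := by
  rw [mass, sum_congr rfl fun i _ => h.2.1 i, sum_congr rfl h.2.2.2.2.2]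
  simp

lemma memSL2.fst_le_one {ν : Slk V d} {Γ : MV V d} (h : memSL2 E ν Γ) (i : V) (x : Fin d) :
    Γ.1 i x ≤ 1 :=
  h.2.1 i ▸ single_le_sum (fun x _ => h.1 i x) (mem_univ x)

lemma memSL2.snd_le_one {ν : Slk V d} {Γ : MV V d} (h : memSL2 E ν Γ) {e : V × V} (he : e ∈ E)
    (x y : Fin d) : Γ.2 e x y ≤ 1 :=
  calc Γ.2 e x y ≤ ∑ y, Γ.2 e x y := single_le_sum (fun y _ => h.2.2.1 e he x y) (mem_univ y)
    _ ≤ ∑ x, ∑ y, Γ.2 e x y :=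
      single_le_sum (f := fun x => ∑ y, Γ.2 e x y)
        (fun x _ => sum_nonneg fun y _ => h.2.2.1 e he x y) (mem_univ x)
    _ = 1 := h.2.2.2.2.2 e he

lemma memSL2.smul_add_smul {μ κ : Slk V d} {X Y : MV V d} (hX : memSL2 E μ X)
    (hY : memSL2 E κ Y) {a b : ℝ} (ha : 0 ≤ a) (hb : 0 ≤ b) (hab : a + b = 1) :
    memSL2 E (a • μ + b • κ) (a • X + b • Y) := by
  obtain ⟨hX0, hX1, hX2, hXr, hXc, hXt⟩ := hX
  obtain ⟨hY0, hY1, hY2, hYr, hYc, hYt⟩ := hY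
  simp only [memSL2, Prod.fst_add, Prod.snd_add, Prod.smul_fst, Prod.smul_snd, Pi.add_apply,
    Pi.smul_apply, smul_eq_mul, sum_add_distrib, ← mul_sum]
  refine ⟨fun i x => by have := hX0 i x; have := hY0 i x; positivity, fun i => ?_,
    fun e he x y => by have := hX2 e he x y; have := hY2 e he x y; positivity,
    fun e he x => ?_, fun e he y => ?_, fun e he => ?_⟩
  · rw [hX1, hY1, mul_one, mul_one, hab]
  · rw [hXr e he, hYr e he]; ring
  · rw [hXc e he, hYc e he]; ring
  · rw [hXt e he, hYt e he, mul_one, mul_one, hab]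

lemma negEntropy_sub_le_mul_mvL1 {τ : ℝ} (hτ : 0 < τ) (hL : 1 ≤ log (1 / τ)) {μ κ : Slk V d}
    {A B : MV V d} (hA : memSL2 E μ A) (hB : memSL2 E κ B) (hBτv : ∀ i x, τ ≤ B.1 i x)
    (hBτe : ∀ e ∈ E, ∀ x y, τ ≤ B.2 e x y) :
    negEntropy E B - negEntropy E A ≤ log (1 / τ) * mvL1 E (A - B) := by
  calc negEntropy E B - negEntropy E A
      = (∑ i, ∑ x, (B.1 i x * log (B.1 i x) - A.1 i x * log (A.1 i x))) +
          ∑ e ∈ E, ∑ x, ∑ y, (B.2 e x y * log (B.2 e x y) - A.2 e x y * log (A.2 e x y)) := by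
        simp only [negEntropy, sum_sub_distrib]
        ring
    _ ≤ (∑ i, ∑ x, log (1 / τ) * |A.1 i x - B.1 i x|) +
          ∑ e ∈ E, ∑ x, ∑ y, log (1 / τ) * |A.2 e x y - B.2 e x y| := by
        gcongr with i _ x _ e he x _ y _
        · exact (le_abs_self _).trans <| abs_mul_log_sub_mul_log_le hτ hL (hA.1 i x)
            (hA.fst_le_one i x) (hBτv i x) (hB.fst_le_one i x)
        · exact (le_abs_self _).trans <| abs_mul_log_sub_mul_log_le hτ hL (hA.2.2.1 e he x y)
            (hA.snd_le_one he x y) (hBτe e he x y) (hB.snd_le_one he x y)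
    _ = log (1 / τ) * mvL1 E (A - B) := by
        simp only [mvL1, mul_add, mul_sum, Prod.fst_sub, Prod.snd_sub, Pi.sub_apply]

lemma regObj_sub_le_mul_mvL1 {Cv : V → Fin d → ℝ} {Ce : V × V → Fin d → Fin d → ℝ} {c η τ : ℝ}
    (hCv : ∀ i x, |Cv i x| ≤ c) (hCe : ∀ e ∈ E, ∀ x y, |Ce e x y| ≤ c) (hη : 0 ≤ η)
    (hτ : 0 < τ) (hL : 1 ≤ log (1 / τ)) {μ κ : Slk V d} {A B : MV V d} (hA : memSL2 E μ A)
    (hB : memSL2 E κ B) (hBτv : ∀ i x, τ ≤ B.1 i x) (hBτe : ∀ e ∈ E, ∀ x y, τ ≤ B.2 e x y) :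
    regObj E Cv Ce η B - regObj E Cv Ce η A ≤ (η * c + log (1 / τ)) * mvL1 E (A - B) := by
  have hinner := mul_le_mul_of_nonneg_left (mvInner_sub_le_mul_mvL1 hCv hCe A B) hη
  have hent := negEntropy_sub_le_mul_mvL1 hτ hL hA hB hBτv hBτe
  simp only [regObj, mvH_eq_mass_sub_negEntropy, hA.mass_eq, hB.mass_eq]
  linarith

lemma negEntropy_convex_gap_ge {μ κ : Slk V d} {X Y : MV V d} (hX : memSL2 E μ X)
    (hY : memSL2 E κ Y) {t : ℝ} (ht0 : 0 < t) (ht1 : t < 1) :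
    t * (1 - t) / 2 * blockDistSq E X Y ≤
      (1 - t) * negEntropy E X + t * negEntropy E Y - negEntropy E ((1 - t) • X + t • Y) := by
  have hv i := sum_mul_log_convex_gap_ge (hX.1 i) (hY.1 i) (hX.2.1 i) (hY.2.1 i) ht0 ht1
  have he e (he : e ∈ E) := by
    have h := sum_mul_log_convex_gap_ge (p := fun q : Fin d × Fin d => X.2 e q.1 q.2)
      (q := fun q => Y.2 e q.1 q.2) (fun q => hX.2.2.1 e he q.1 q.2)
      (fun q => hY.2.2.1 e he q.1 q.2) (by rw [Fintype.sum_prod_type']; exact hX.2.2.2.2.2 e he)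
      (by rw [Fintype.sum_prod_type']; exact hY.2.2.2.2.2 e he) ht0 ht1
    simpa only [Fintype.sum_prod_type] using h
  calc t * (1 - t) / 2 * blockDistSq E X Y
      = (∑ i, t * (1 - t) / 2 * (∑ x, |X.1 i x - Y.1 i x|) ^ 2) +
          ∑ e ∈ E, t * (1 - t) / 2 * (∑ x, ∑ y, |X.2 e x y - Y.2 e x y|) ^ 2 := by
        rw [blockDistSq, mul_add, mul_sum, mul_sum]
    _ ≤ _ := add_le_add (sum_le_sum fun i _ => hv i) (sum_le_sum he)
    _ = _ := by
        simp only [negEntropy, Prod.fst_add, Prod.snd_add, Prod.smul_fst, Prod.smul_snd,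
          Pi.add_apply, Pi.smul_apply, smul_eq_mul, sum_add_distrib, sum_sub_distrib, mul_add,
          mul_sum]
        ring

lemma half_blockDistSq_le_regObj_sub {Cv : V → Fin d → ℝ} {Ce : V × V → Fin d → Fin d → ℝ}
    {η : ℝ} {μ : Slk V d} {X Y : MV V d} (hX : memSL2 E μ X)
    (hmin : ∀ Z, memSL2 E μ Z → regObj E Cv Ce η X ≤ regObj E Cv Ce η Z) (hY : memSL2 E μ Y) :
    blockDistSq E Y X / 2 ≤ regObj E Cv Ce η Y - regObj E Cv Ce η X := by
  refine le_of_forall_one_sub_mul_le fun t ht0 ht1 => ?_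
  have hZ : memSL2 E μ ((1 - t) • X + t • Y) := by
    simpa [← add_smul] using hX.smul_add_smul hY (sub_nonneg.2 ht1.le) ht0.le (sub_add_cancel 1 t)
  have hgap := negEntropy_convex_gap_ge hX hY ht0 ht1
  have hZX := hmin _ hZ
  simp only [regObj, mvH_eq_mass_sub_negEntropy, hX.mass_eq, hY.mass_eq, hZ.mass_eq,
    mvInner_smul_add_smul] at hZX ⊢
  rw [blockDistSq_comm] at hgap
  refine le_of_mul_le_mul_left ?_ ht0
  linarith

lemma mvL1_sub_smul_add_smul_le {μ κ : Slk V d} {Γ U : MV V d} (hΓ : memSL2 E μ Γ)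
    (hU : memSL2 E κ U) (G : MV V d) {s t : ℝ} (hs : 0 ≤ s) (ht : 0 ≤ t) (hst : s + t = 1) :
    mvL1 E (Γ - (s • G + t • U)) ≤ s * mvL1 E (Γ - G) + 2 * t * (Fintype.card V + #E) := by
  have key {γ g u : ℝ} (hγ : 0 ≤ γ) (hu : 0 ≤ u) :
      |γ - (s * g + t * u)| ≤ s * |γ - g| + t * (γ + u) := by
    calc |γ - (s * g + t * u)| = |s * (γ - g) + t * (γ - u)| := by
          congr 1; linear_combination -γ * hst
      _ ≤ |s * (γ - g)| + |t * (γ - u)| := abs_add_le _ _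
      _ ≤ s * |γ - g| + t * (γ + u) := by
          rw [abs_mul, abs_mul, abs_of_nonneg hs, abs_of_nonneg ht]
          gcongr
          exact (abs_sub _ _).trans_eq (by rw [abs_of_nonneg hγ, abs_of_nonneg hu])
  calc mvL1 E (Γ - (s • G + t • U))
      ≤ (∑ i, ∑ x, (s * |Γ.1 i x - G.1 i x| + t * (Γ.1 i x + U.1 i x))) +
          ∑ e ∈ E, ∑ x, ∑ y, (s * |Γ.2 e x y - G.2 e x y| + t * (Γ.2 e x y + U.2 e x y)) := by
        simp only [mvL1, Prod.fst_sub, Prod.snd_sub, Prod.fst_add, Prod.snd_add, Prod.smul_fst,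
          Prod.smul_snd, Pi.sub_apply, Pi.add_apply, Pi.smul_apply, smul_eq_mul]
        gcongr with i _ x _ e he x _ y _
        · exact key (hΓ.1 i x) (hU.1 i x)
        · exact key (hΓ.2.2.1 e he x y) (hU.2.2.1 e he x y)
    _ = s * mvL1 E (Γ - G) + t * (mass E Γ + mass E U) := by
        simp only [mvL1, mass, Prod.fst_sub, Prod.snd_sub, Pi.sub_apply, sum_add_distrib,
          ← mul_sum]
        ring
    _ = s * mvL1 E (Γ - G) + 2 * t * (Fintype.card V + #E) := by
        rw [hΓ.mass_eq, hU.mass_eq]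
        ring

end MarginalVectors

section Repair

lemma sum_abs_sub_le_of_mul_le {ι : Type*} {s : Finset ι} {p q : ι → ℝ} {c : ℝ}
    (hp : ∀ x ∈ s, 0 ≤ p x) (hc : c ≤ 1) (hpq : ∀ x ∈ s, c * p x ≤ q x) (hsum : ∑ x ∈ s, q x = ∑ x ∈ s, p x) :
    ∑ x ∈ s, |q x - p x| ≤ 2 * (1 - c) * ∑ x ∈ s, p x := by
  calc ∑ x ∈ s, |q x - p x| ≤ ∑ x ∈ s, (q x - p x + 2 * (1 - c) * p x) := by
        gcongr with x hx
        have := hp x hx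
        have := hpq x hx
        rw [abs_le]
        constructor <;> nlinarith
    _ = 2 * (1 - c) * ∑ x ∈ s, p x := by
        rw [sum_add_distrib, sum_sub_distrib, hsum, sub_self, zero_add, mul_sum]

variable {ι κ : Type*} [Fintype ι] [Fintype κ]

/-- The law of `(X', Y')`, where `(X, Y) ~ P`, `X'` equals `X` with probability `1 - Σ a` and is
otherwise drawn from `a / Σ a`, and `Y'` is obtained from `Y` and `b` in the same way,
independently. -/
def repairMat (P : ι → κ → ℝ) (a : ι → ℝ) (b : κ → ℝ) : ι → κ → ℝ := fun x y =>
  (1 - ∑ x, a x) * (1 - ∑ y, b y) * P x y + (1 - ∑ x, a x) * (∑ y, P x y) * b y +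
    a x * ((1 - ∑ y, b y) * ∑ x, P x y) + a x * b y

variable {P : ι → κ → ℝ} {a : ι → ℝ} {b : κ → ℝ}

lemma mul_le_repairMat (hP : ∀ x y, 0 ≤ P x y) (ha : ∀ x, 0 ≤ a x) (hb : ∀ y, 0 ≤ b y)
    (ha1 : ∑ x, a x ≤ 1) (hb1 : ∑ y, b y ≤ 1) (x : ι) (y : κ) :
    (1 - ∑ x, a x) * (1 - ∑ y, b y) * P x y ≤ repairMat P a b x y := by
  have := sub_nonneg.2 ha1
  have := sub_nonneg.2 hb1
  have := ha x
  have := hb y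
  have : 0 ≤ ∑ y, P x y := sum_nonneg fun y _ => hP x y
  have : 0 ≤ ∑ x, P x y := sum_nonneg fun x _ => hP x y
  unfold repairMat
  rw [add_assoc, add_assoc, le_add_iff_nonneg_right]
  positivity

lemma repairMat_nonneg (hP : ∀ x y, 0 ≤ P x y) (ha : ∀ x, 0 ≤ a x) (hb : ∀ y, 0 ≤ b y)
    (ha1 : ∑ x, a x ≤ 1) (hb1 : ∑ y, b y ≤ 1) (x : ι) (y : κ) : 0 ≤ repairMat P a b x y :=
  le_trans (mul_nonneg (mul_nonneg (sub_nonneg.2 ha1) (sub_nonneg.2 hb1)) (hP x y))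
    (mul_le_repairMat hP ha hb ha1 hb1 x y)

lemma sum_repairMat_row (hP1 : ∑ x, ∑ y, P x y = 1) (x : ι) :
    ∑ y, repairMat P a b x y = (1 - ∑ x, a x) * ∑ y, P x y + a x := by
  simp only [repairMat, sum_add_distrib, ← mul_sum]
  rw [sum_comm, hP1]
  ring

lemma sum_repairMat_col (hP1 : ∑ x, ∑ y, P x y = 1) (y : κ) :
    ∑ x, repairMat P a b x y = (1 - ∑ y, b y) * ∑ x, P x y + b y := by
  simp only [repairMat, sum_add_distrib, ← mul_sum, ← sum_mul, hP1]
  ring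

lemma sum_abs_repairMat_sub_le (hP : ∀ x y, 0 ≤ P x y) (hP1 : ∑ x, ∑ y, P x y = 1)
    (ha : ∀ x, 0 ≤ a x) (hb : ∀ y, 0 ≤ b y) (ha1 : ∑ x, a x ≤ 1) (hb1 : ∑ y, b y ≤ 1) :
    ∑ x, ∑ y, |repairMat P a b x y - P x y| ≤ 2 * (∑ x, a x + ∑ y, b y) := by
  have hα := sum_nonneg fun x (_ : x ∈ univ) => ha x
  have hβ := sum_nonneg fun y (_ : y ∈ univ) => hb y
  have hQ1 : ∑ x, ∑ y, repairMat P a b x y = 1 := by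
    simp only [sum_repairMat_row hP1, sum_add_distrib, ← mul_sum, hP1]
    ring
  have key := sum_abs_sub_le_of_mul_le (s := univ) (p := fun q : ι × κ => P q.1 q.2)
    (q := fun q => repairMat P a b q.1 q.2) (c := (1 - ∑ x, a x) * (1 - ∑ y, b y))
    (fun q _ => hP q.1 q.2) (by nlinarith) (fun q _ => mul_le_repairMat hP ha hb ha1 hb1 q.1 q.2)
    (by simp only [Fintype.sum_prod_type, hQ1, hP1])
  simp only [Fintype.sum_prod_type, hP1] at key
  nlinarith

end Repair

lemma slkL1_nonneg {V : Type} {d : ℕ} (E : Finset (V × V)) (ν : Slk V d) : 0 ≤ slkL1 E ν :=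
  sum_nonneg fun _ _ => add_nonneg (sum_nonneg fun _ _ => abs_nonneg _)
    (sum_nonneg fun _ _ => abs_nonneg _)

lemma slkL1_smul {V : Type} {d : ℕ} (E : Finset (V × V)) (c : ℝ) (ν : Slk V d) :
    slkL1 E (c • ν) = |c| * slkL1 E ν := by
  simp only [slkL1, Prod.smul_fst, Prod.smul_snd, Pi.smul_apply, smul_eq_mul, abs_mul, mul_sum,
    mul_add]

lemma isSlack.smul {V : Type} {d : ℕ} {E : Finset (V × V)} {ν : Slk V d} (hν : isSlack E ν)
    (c : ℝ) : isSlack E (c • ν) := fun e he => by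
  simp only [Prod.smul_fst, Prod.smul_snd, Pi.smul_apply, smul_eq_mul, ← mul_sum, (hν e he).1,
    (hν e he).2, mul_zero, and_self]

section SlackRepair

variable {V : Type} [DecidableEq V] {d : ℕ} {E : Finset (V × V)}

lemma card_filter_le_degG [Fintype V] {g : V × V → V} (hg : ∀ e, g e = e.1 ∨ g e = e.2) (i : V) :
    #{e ∈ E | g e = i} ≤ degG E := by
  refine (card_le_card fun e he => ?_).trans (le_sup (f := fun i => #{e ∈ E | e.1 = i ∨ e.2 = i})
    (mem_univ i))
  rw [mem_filter] at he ⊢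
  rcases hg e with h | h
  exacts [⟨he.1, Or.inl (h.symm.trans he.2)⟩, ⟨he.1, Or.inr (h.symm.trans he.2)⟩]

lemma sum_comp_le_degG_mul [Fintype V] {g : V × V → V} (hg : ∀ e, g e = e.1 ∨ g e = e.2) {f : V → ℝ}
    (hf : ∀ i, 0 ≤ f i) : ∑ e ∈ E, f (g e) ≤ degG E * ∑ i, f i := by
  rw [← sum_fiberwise E g, mul_sum]
  gcongr with i
  rw [sum_congr rfl fun e he => by rw [(mem_filter.1 he).2], sum_const, nsmul_eq_mul]
  exact mul_le_mul_of_nonneg_right (by exact_mod_cast card_filter_le_degG hg i) (hf i)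

lemma slkL1_le_degG_mul [Fintype V] (ν : Slk V d) : slkL1 E ν ≤ degG E * slkL1 E ν := by
  rcases E.eq_empty_or_nonempty with rfl | ⟨e, he⟩
  · simp [slkL1]
  have hpos : 0 < #{e' ∈ E | e'.1 = e.1} := card_pos.2 ⟨e, mem_filter.2 ⟨he, rfl⟩⟩
  have hdeg := card_filter_le_degG (E := E) (g := Prod.fst) (fun e => Or.inl rfl) e.1
  exact le_mul_of_one_le_left (slkL1_nonneg E ν) (by exact_mod_cast hpos.trans_le hdeg)

lemma degG_add_one_mul_slkL1_le [Fintype V] {d : ℕ} (hd : 1 ≤ d) (ν : Slk V d) :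
    (degG E + 1) * slkL1 E ν ≤ 2 * d * degG E * slkL1 E ν := by
  have hdeg := slkL1_le_degG_mul (E := E) ν
  have hdν : (0 : ℝ) ≤ degG E * slkL1 E ν := (slkL1_nonneg E ν).trans hdeg
  have hd1 : (1 : ℝ) ≤ d := Nat.one_le_cast.2 hd
  nlinarith

variable (E) in
def incidentSlack (μ : Slk V d) (i : V) (x : Fin d) : ℝ :=
  (∑ e ∈ E with e.1 = i, |μ.1 e x|) + ∑ e ∈ E with e.2 = i, |μ.2 e x|

lemma incidentSlack_nonneg (μ : Slk V d) (i : V) (x : Fin d) : 0 ≤ incidentSlack E μ i x :=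
  add_nonneg (sum_nonneg fun _ _ => abs_nonneg _) (sum_nonneg fun _ _ => abs_nonneg _)

lemma abs_fst_le_incidentSlack (μ : Slk V d) {e : V × V} (he : e ∈ E) (x : Fin d) :
    |μ.1 e x| ≤ incidentSlack E μ e.1 x :=
  le_add_of_le_of_nonneg (single_le_sum (s := {e' ∈ E | e'.1 = e.1}) (f := fun e => |μ.1 e x|)
    (fun _ _ => abs_nonneg _) (mem_filter.2 ⟨he, rfl⟩)) (sum_nonneg fun _ _ => abs_nonneg _)

lemma abs_snd_le_incidentSlack (μ : Slk V d) {e : V × V} (he : e ∈ E) (x : Fin d) :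
    |μ.2 e x| ≤ incidentSlack E μ e.2 x :=
  le_add_of_nonneg_of_le (sum_nonneg fun _ _ => abs_nonneg _) (single_le_sum
    (s := {e' ∈ E | e'.2 = e.2}) (f := fun e => |μ.2 e x|) (fun _ _ => abs_nonneg _)
    (mem_filter.2 ⟨he, rfl⟩))

lemma sum_incidentSlack [Fintype V] (μ : Slk V d) :
    ∑ i, ∑ x, incidentSlack E μ i x = slkL1 E μ := by
  rw [sum_comm]
  simp only [incidentSlack, sum_add_distrib, sum_fiberwise E Prod.fst (fun e => |μ.1 e _|),
    sum_fiberwise E Prod.snd (fun e => |μ.2 e _|), slkL1]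
  rw [sum_comm, sum_comm (s := univ)]

variable (E) in
def repairWeight (μ : Slk V d) (i : V) (x : Fin d) : ℝ := min (incidentSlack E μ i x) (1 / d)

variable (E) in
def slackRepair (μ : Slk V d) (Γ : MV V d) : MV V d :=
  (fun i x => (1 - ∑ x', repairWeight E μ i x') * Γ.1 i x + repairWeight E μ i x,
    fun e => repairMat (Γ.2 e) (fun x => repairWeight E μ e.1 x + μ.1 e x)
      (fun y => repairWeight E μ e.2 y + μ.2 e y))

lemma repairWeight_nonneg (μ : Slk V d) (i : V) (x : Fin d) : 0 ≤ repairWeight E μ i x :=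
  le_min (incidentSlack_nonneg μ i x) (by positivity)

lemma sum_repairWeight_le_one (μ : Slk V d) (i : V) : ∑ x, repairWeight E μ i x ≤ 1 :=
  calc ∑ x, repairWeight E μ i x ≤ ∑ _x : Fin d, (1 / d : ℝ) :=
        sum_le_sum fun _ _ => min_le_right _ _
    _ ≤ 1 := by
      rw [sum_const, card_univ, Fintype.card_fin, nsmul_eq_mul, mul_one_div]
      exact div_self_le_one _

lemma sum_sum_repairWeight_le [Fintype V] (μ : Slk V d) :
    ∑ i, ∑ x, repairWeight E μ i x ≤ slkL1 E μ :=
  sum_incidentSlack (E := E) μ ▸ sum_le_sum fun _ _ => sum_le_sum fun _ _ => min_le_left _ _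

variable {μ : Slk V d}

lemma repairWeight_fst_add_nonneg
    (hμd : ∀ e ∈ E, ∀ x, |μ.1 e x| ≤ 1 / d ∧ |μ.2 e x| ≤ 1 / d) {e : V × V} (he : e ∈ E)
    (x : Fin d) : 0 ≤ repairWeight E μ e.1 x + μ.1 e x := by
  have : |μ.1 e x| ≤ repairWeight E μ e.1 x :=
    le_min (abs_fst_le_incidentSlack μ he x) (hμd e he x).1
  linarith [neg_abs_le (μ.1 e x)]

lemma repairWeight_snd_add_nonneg
    (hμd : ∀ e ∈ E, ∀ x, |μ.1 e x| ≤ 1 / d ∧ |μ.2 e x| ≤ 1 / d) {e : V × V} (he : e ∈ E)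
    (y : Fin d) : 0 ≤ repairWeight E μ e.2 y + μ.2 e y := by
  have : |μ.2 e y| ≤ repairWeight E μ e.2 y :=
    le_min (abs_snd_le_incidentSlack μ he y) (hμd e he y).2
  linarith [neg_abs_le (μ.2 e y)]

lemma sum_repairWeight_fst_add (hμ : isSlack E μ) {e : V × V} (he : e ∈ E) :
    ∑ x, (repairWeight E μ e.1 x + μ.1 e x) = ∑ x, repairWeight E μ e.1 x := by
  rw [sum_add_distrib, (hμ e he).1, add_zero]

lemma sum_repairWeight_snd_add (hμ : isSlack E μ) {e : V × V} (he : e ∈ E) :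
    ∑ y, (repairWeight E μ e.2 y + μ.2 e y) = ∑ y, repairWeight E μ e.2 y := by
  rw [sum_add_distrib, (hμ e he).2, add_zero]

lemma memSL2_slackRepair [Fintype V] {Γ : MV V d} (hΓ : memSL2 E 0 Γ) (hμ : isSlack E μ)
    (hμd : ∀ e ∈ E, ∀ x, |μ.1 e x| ≤ 1 / d ∧ |μ.2 e x| ≤ 1 / d) :
    memSL2 E μ (slackRepair E μ Γ) := by
  obtain ⟨hΓ0, hΓ1, hΓ2, hΓr, hΓc, hΓt⟩ := hΓ
  have hw := repairWeight_nonneg (E := E) μ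
  have hw1 := sum_repairWeight_le_one (E := E) μ
  simp only [Prod.fst_zero, Prod.snd_zero, Pi.zero_apply, add_zero] at hΓr hΓc
  refine ⟨fun i x => ?_, fun i => ?_, fun e he x y => ?_, fun e he x => ?_, fun e he y => ?_,
    fun e he => ?_⟩ <;> simp only [slackRepair]
  · have := hΓ0 i x; have := hw i x; have := hw1 i; nlinarith
  · rw [sum_add_distrib, ← mul_sum, hΓ1]; ring
  · exact repairMat_nonneg (hΓ2 e he) (repairWeight_fst_add_nonneg hμd he)
      (repairWeight_snd_add_nonneg hμd he) ((sum_repairWeight_fst_add hμ he).trans_le (hw1 _))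
      ((sum_repairWeight_snd_add hμ he).trans_le (hw1 _)) x y
  · rw [sum_repairMat_row (hΓt e he), hΓr e he, sum_repairWeight_fst_add hμ he]; ring
  · rw [sum_repairMat_col (hΓt e he), hΓc e he, sum_repairWeight_snd_add hμ he]; ring
  · rw [sum_congr rfl fun x _ => sum_repairMat_row (hΓt e he) x, sum_add_distrib, ← mul_sum,
      sum_congr rfl fun x _ => hΓr e he x, hΓ1]
    ring

lemma mvL1_sub_slackRepair_le [Fintype V] {Γ : MV V d} (hΓ : memSL2 E 0 Γ) (hμ : isSlack E μ)
    (hμd : ∀ e ∈ E, ∀ x, |μ.1 e x| ≤ 1 / d ∧ |μ.2 e x| ≤ 1 / d) :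
    mvL1 E (Γ - slackRepair E μ Γ) ≤ 2 * (2 * degG E + 1) * slkL1 E μ := by
  set β : V → ℝ := fun i => ∑ x, repairWeight E μ i x
  have hβ i : 0 ≤ β i := sum_nonneg fun x _ => repairWeight_nonneg μ i x
  have hvert i : ∑ x, |Γ.1 i x - (slackRepair E μ Γ).1 i x| ≤ 2 * β i := by
    simp only [abs_sub_comm (Γ.1 i _)]
    have := sum_abs_sub_le_of_mul_le (s := univ) (p := Γ.1 i)
      (q := (slackRepair E μ Γ).1 i) (c := 1 - β i)
      (fun x _ => hΓ.1 i x) (by linarith [hβ i])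
      (fun x _ => le_add_of_nonneg_right (repairWeight_nonneg μ i x))
      (by rw [(memSL2_slackRepair hΓ hμ hμd).2.1 i, hΓ.2.1 i])
    rwa [hΓ.2.1 i, sub_sub_cancel, mul_one] at this
  have hedge e (he : e ∈ E) :
      ∑ x, ∑ y, |Γ.2 e x y - (slackRepair E μ Γ).2 e x y| ≤ 2 * (β e.1 + β e.2) := by
    simp only [abs_sub_comm (Γ.2 e _ _)]
    have := sum_abs_repairMat_sub_le (hΓ.2.2.1 e he) (hΓ.2.2.2.2.2 e he)
      (repairWeight_fst_add_nonneg hμd he) (repairWeight_snd_add_nonneg hμd he)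
      ((sum_repairWeight_fst_add hμ he).trans_le (sum_repairWeight_le_one μ _))
      ((sum_repairWeight_snd_add hμ he).trans_le (sum_repairWeight_le_one μ _))
    rwa [sum_repairWeight_fst_add hμ he, sum_repairWeight_snd_add hμ he] at this
  have hdeg1 := sum_comp_le_degG_mul (E := E) (g := Prod.fst) (fun e => Or.inl rfl) hβ
  have hdeg2 := sum_comp_le_degG_mul (E := E) (g := Prod.snd) (fun e => Or.inr rfl) hβ
  have hβtot : ∑ i, β i ≤ slkL1 E μ := sum_sum_repairWeight_le μ
  calc mvL1 E (Γ - slackRepair E μ Γ)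
      ≤ (∑ i, 2 * β i) + ∑ e ∈ E, 2 * (β e.1 + β e.2) :=
        add_le_add (sum_le_sum fun i _ => hvert i) (sum_le_sum hedge)
    _ ≤ 2 * (2 * degG E + 1) * ∑ i, β i := by
        rw [← mul_sum, ← mul_sum, sum_add_distrib]
        nlinarith
    _ ≤ 2 * (2 * degG E + 1) * slkL1 E μ := by gcongr

end SlackRepair

section Mixing

variable {V : Type} [Fintype V] {d : ℕ} {E : Finset (V × V)}

variable (V) in
def uniformMV (d : ℕ) : MV V d := (fun _ _ => 1 / d, fun _ _ _ => 1 / d ^ 2)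

lemma memSL2_uniformMV (hd : d ≠ 0) : memSL2 E 0 (uniformMV V d) := by
  have hd' : (d : ℝ) ≠ 0 := Nat.cast_ne_zero.2 hd
  refine ⟨fun _ _ => by simp only [uniformMV]; positivity, fun _ => ?_,
    fun _ _ _ _ => by simp only [uniformMV]; positivity, fun _ _ _ => ?_,
    fun _ _ _ => ?_, fun _ _ => ?_⟩ <;>
  · simp only [uniformMV, Prod.fst_zero, Prod.snd_zero, Pi.zero_apply, add_zero, sum_const,
      card_univ, Fintype.card_fin, nsmul_eq_mul]
    field_simp

variable [DecidableEq V]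

theorem exists_memSL2_entries_ge_mvL1_sub_le (hd : d ≠ 0) {τ : ℝ} (hτ0 : 0 < τ)
    (hτ1 : (d : ℝ) ^ 2 * τ < 1) {ν : Slk V d} (hν : isSlack E ν)
    (hνd : ∀ e ∈ E, ∀ x, |ν.1 e x| ≤ (1 - d ^ 2 * τ) / d ∧ |ν.2 e x| ≤ (1 - d ^ 2 * τ) / d)
    {Γ : MV V d} (hΓ : memSL2 E 0 Γ) :
    ∃ G, memSL2 E ν G ∧ (∀ i x, τ ≤ G.1 i x) ∧ (∀ e ∈ E, ∀ x y, τ ≤ G.2 e x y) ∧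
      mvL1 E (Γ - G) ≤
        2 * (2 * degG E + 1) * slkL1 E ν + 2 * (#E + Fintype.card V) * d ^ 2 * τ := by
  have hd' : (0 : ℝ) < d := Nat.cast_pos.2 (Nat.pos_of_ne_zero hd)
  set t : ℝ := d ^ 2 * τ with ht
  set s : ℝ := 1 - t
  have hs : 0 < s := sub_pos.2 hτ1
  have ht0 : 0 < t := by positivity
  have hμ : isSlack E (s⁻¹ • ν) := hν.smul _
  have hμd e (he : e ∈ E) x : |(s⁻¹ • ν).1 e x| ≤ 1 / d ∧ |(s⁻¹ • ν).2 e x| ≤ 1 / d := by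
    simp only [Prod.smul_fst, Prod.smul_snd, Pi.smul_apply, smul_eq_mul, abs_mul,
      abs_inv, abs_of_pos hs, inv_mul_le_iff₀ hs, mul_one_div]
    exact hνd e he x
  set G := slackRepair E (s⁻¹ • ν) Γ
  have hG := memSL2_slackRepair hΓ hμ hμd
  have hU := memSL2_uniformMV (V := V) (E := E) hd
  refine ⟨s • G + t • uniformMV V d, ?_, fun i x => ?_, fun e he x y => ?_, ?_⟩
  · simpa [smul_inv_smul₀ hs.ne'] using hG.smul_add_smul hU hs.le ht0.le (sub_add_cancel 1 t)
  · have := mul_nonneg hs.le (hG.1 i x)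
    have hdτ : τ ≤ t * (1 / d) := by
      rw [ht, mul_one_div, pow_two, mul_assoc, mul_div_cancel_left₀ _ hd'.ne']
      exact le_mul_of_one_le_left hτ0.le (Nat.one_le_cast.2 (Nat.pos_of_ne_zero hd))
    simp only [uniformMV, Prod.fst_add, Prod.smul_fst, Pi.add_apply, Pi.smul_apply, smul_eq_mul]
    linarith
  · have := mul_nonneg hs.le (hG.2.2.1 e he x y)
    have hdτ : t * (1 / d ^ 2) = τ := by rw [ht]; field_simp
    simp only [uniformMV, Prod.snd_add, Prod.smul_snd, Pi.add_apply, Pi.smul_apply, smul_eq_mul]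
    linarith
  · have hGΓ := mvL1_sub_slackRepair_le hΓ hμ hμd
    rw [slkL1_smul, abs_inv, abs_of_pos hs] at hGΓ
    calc mvL1 E (Γ - (s • G + t • uniformMV V d))
        ≤ s * mvL1 E (Γ - G) + 2 * t * (Fintype.card V + #E) :=
          mvL1_sub_smul_add_smul_le hΓ hU G hs.le ht0.le (sub_add_cancel 1 t)
      _ ≤ s * (2 * (2 * degG E + 1) * (s⁻¹ * slkL1 E ν)) + 2 * t * (Fintype.card V + #E) := by
          gcongr
      _ = _ := by
          field_simp
          ring

theorem exists_memSL2_near_of_le (hd : 1 ≤ d) {τ : ℝ} (hτ0 : 0 < τ) (hτ : τ ≤ 1 / (8 * d ^ 2))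
    {ν : Slk V d} (hν : isSlack E ν)
    (hinf : ∀ e ∈ E, ∀ x, |ν.1 e x| ≤ 1 / (4 * d) ∧ |ν.2 e x| ≤ 1 / (4 * d))
    {Γ : MV V d} (hΓ : memSL2 E 0 Γ) :
    ∃ G, memSL2 E ν G ∧ (∀ i x, τ ≤ G.1 i x) ∧ (∀ e ∈ E, ∀ x y, τ ≤ G.2 e x y) ∧
      mvL1 E (Γ - G) ≤
        2 * (2 * degG E + 1) * slkL1 E ν + 2 * (#E + Fintype.card V) * d ^ 2 * τ := by
  have hd1 : (1 : ℝ) ≤ d := Nat.one_le_cast.2 hd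
  have hdτ : (d : ℝ) ^ 2 * τ ≤ 1 / 8 := by
    rw [le_div_iff₀ (by positivity)] at hτ ⊢
    linarith
  have hbound : 1 / (4 * d : ℝ) ≤ (1 - d ^ 2 * τ) / d := by
    rw [div_le_div_iff₀ (by positivity) (by positivity)]
    nlinarith
  exact exists_memSL2_entries_ge_mvL1_sub_le (by omega) hτ0 (by linarith) hν
    (fun e he x => ⟨(hinf e he x).1.trans hbound, (hinf e he x).2.trans hbound⟩) hΓ

end Mixing

theorem stmt_16_general {V : Type} [Fintype V] [DecidableEq V] {d : ℕ} (hd : 1 ≤ d)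
    (E : Finset (V × V))
    (Cv : V → Fin d → ℝ) (Ce : V × V → Fin d → Fin d → ℝ)
    (Cinf : ℝ)
    (hCinf : IsGreatest {r : ℝ | (∃ i x, r = |Cv i x|) ∨
        ∃ e ∈ E, ∃ x y, r = |Ce e x y|} Cinf)
    (η : ℝ) (hη : 0 < η)
    (τ : ℝ) (hτ0 : 0 < τ) (hτ : τ ≤ 1 / (8 * d ^ 2))
    (ν : Slk V d) (hν : isSlack E ν)
    (hinf : ∀ e ∈ E, ∀ x : Fin d,
      |ν.1 e x| ≤ 1 / (4 * d) ∧ |ν.2 e x| ≤ 1 / (4 * d))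
    (Γ : MV V d)
    (hΓ : memSL2 E ν Γ ∧ ∀ Γ'', memSL2 E ν Γ'' →
      mvInner E Cv Ce Γ - (1 / η) * mvH E Γ ≤
        mvInner E Cv Ce Γ'' - (1 / η) * mvH E Γ'')
    (Γη : MV V d)
    (hΓη : memSL2 E (0 : Slk V d) Γη ∧ ∀ Γ'', memSL2 E (0 : Slk V d) Γ'' →
      mvInner E Cv Ce Γη - (1 / η) * mvH E Γη ≤
        mvInner E Cv Ce Γ'' - (1 / η) * mvH E Γ'')
    (Γ2 : MV V d)
    (hΓ2mem : memSL2 E (0 : Slk V d) Γ2)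
    (hΓ2τv : ∀ i x, τ ≤ Γ2.1 i x)
    (hΓ2τe : ∀ e ∈ E, ∀ x y, τ ≤ Γ2.2 e x y)
    (hΓ2close : mvL1 E (Γ - Γ2) ≤
      2 * slkL1 E ν + 2 * ((E.card : ℝ) + Fintype.card V) * d ^ 2 * τ) :
    (∑ i : V, (1 / 2) * (∑ x : Fin d, |Γ2.1 i x - Γη.1 i x|) ^ 2) +
      (∑ e ∈ E, (1 / 2) * (∑ x : Fin d, ∑ y : Fin d, |Γ2.2 e x y - Γη.2 e x y|) ^ 2) ≤
    (η * Cinf + Real.log (1 / τ)) *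
      (8 * d * degG E * slkL1 E ν +
        10 * ((E.card : ℝ) + Fintype.card V) * d ^ 2 * τ) := by
  have hCv i x : |Cv i x| ≤ Cinf := hCinf.2 (Or.inl ⟨i, x, rfl⟩)
  have hCe e (he : e ∈ E) x y : |Ce e x y| ≤ Cinf := hCinf.2 (Or.inr ⟨e, he, x, y, rfl⟩)
  have hCinf0 : 0 ≤ Cinf := by
    obtain ⟨i, x, h⟩ | ⟨e, -, x, y, h⟩ := hCinf.1 <;> exact h ▸ abs_nonneg _
  have hτ3 : τ ≤ 1 / 3 := hτ.trans (one_div_le_one_div_of_le (by norm_num)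
    (by nlinarith [(Nat.one_le_cast (α := ℝ)).2 hd]))
  have hL := one_le_log_one_div hτ0 hτ3
  obtain ⟨G, hG, hGv, hGe, hGdist⟩ := exists_memSL2_near_of_le hd hτ0 hτ hν hinf hΓη.1
  have hgap := half_blockDistSq_le_regObj_sub hΓη.1
    (fun Z hZ => regObj_le_regObj hη (hΓη.2 Z hZ)) hΓ2mem
  have hΓ2Γ := regObj_sub_le_mul_mvL1 hCv hCe hη.le hτ0 hL hΓ.1 hΓ2mem hΓ2τv hΓ2τe
  have hΓG := regObj_le_regObj hη (hΓ.2 G hG)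
  have hGΓη := regObj_sub_le_mul_mvL1 hCv hCe hη.le hτ0 hL hΓη.1 hG hGv hGe
  have hdeg := degG_add_one_mul_slkL1_le (E := E) hd ν
  have hM : 0 ≤ ((#E : ℝ) + Fintype.card V) * d ^ 2 * τ := by positivity
  calc _ = blockDistSq E Γ2 Γη / 2 := by
        simp only [blockDistSq, add_div, sum_div]
        ring_nf
    _ ≤ (η * Cinf + log (1 / τ)) * (mvL1 E (Γ - Γ2) + mvL1 E (Γη - G)) := by
        linarith
    _ ≤ _ := mul_le_mul_of_nonneg_left (by linarith) (by positivity)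

/-- The entropy-regularized optimum over the slack polytope,
suitably projected back to `𝕃₂`, is close to the entropy-regularized optimum
over `𝕃₂` in the component-wise squared `l₁` sense. -/
theorem stmt_16 {V : Type} [Fintype V] [DecidableEq V] {d : ℕ} (hd : 1 ≤ d)
    (E : Finset (V × V))
    (hcover : ∀ i : V, ∃ e ∈ E, e.1 = i ∨ e.2 = i)
    (Cv : V → Fin d → ℝ) (Ce : V × V → Fin d → Fin d → ℝ)
    (Cinf : ℝ)
    (hCinf : IsGreatest {r : ℝ | (∃ i x, r = |Cv i x|) ∨
        ∃ e ∈ E, ∃ x y, r = |Ce e x y|} Cinf)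
    (η : ℝ) (hη : 0 < η)
    (τ : ℝ) (hτ0 : 0 < τ) (hτ : τ ≤ 1 / (8 * d ^ 2))
    (ν : Slk V d) (hν : isSlack E ν)
    (hinf : ∀ e ∈ E, ∀ x : Fin d,
      |ν.1 e x| ≤ 1 / (4 * d) ∧ |ν.2 e x| ≤ 1 / (4 * d))
    (Γ : MV V d)
    (hΓ : memSL2 E ν Γ ∧ ∀ Γ'', memSL2 E ν Γ'' →
      mvInner E Cv Ce Γ - (1 / η) * mvH E Γ ≤
        mvInner E Cv Ce Γ'' - (1 / η) * mvH E Γ'')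
    (Γη : MV V d)
    (hΓη : memSL2 E (0 : Slk V d) Γη ∧ ∀ Γ'', memSL2 E (0 : Slk V d) Γ'' →
      mvInner E Cv Ce Γη - (1 / η) * mvH E Γη ≤
        mvInner E Cv Ce Γ'' - (1 / η) * mvH E Γ'')
    (Γ2 : MV V d)
    (hΓ2mem : memSL2 E (0 : Slk V d) Γ2)
    (hΓ2τv : ∀ i x, τ ≤ Γ2.1 i x)
    (hΓ2τe : ∀ e ∈ E, ∀ x y, τ ≤ Γ2.2 e x y)
    (hΓ2close : mvL1 E (Γ - Γ2) ≤
      2 * slkL1 E ν + 2 * ((E.card : ℝ) + Fintype.card V) * d ^ 2 * τ) :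
    (∑ i : V, (1 / 2) * (∑ x : Fin d, |Γ2.1 i x - Γη.1 i x|) ^ 2) +
      (∑ e ∈ E, (1 / 2) * (∑ x : Fin d, ∑ y : Fin d, |Γ2.2 e x y - Γη.2 e x y|) ^ 2) ≤
    (η * Cinf + Real.log (1 / τ)) *
      (8 * d * degG E * slkL1 E ν +
        10 * ((E.card : ℝ) + Fintype.card V) * d ^ 2 * τ) :=
  stmt_16_general hd E Cv Ce Cinf hCinf η hη τ hτ0 hτ ν hν hinf Γ hΓ Γη hΓη Γ2 hΓ2mem hΓ2τv hΓ2τe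
    hΓ2close
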